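/- Let f: M → ℝ be smooth on a Riemannian manifold with a dualistic structure (g, ∇, ∇*), let p ∈ M, and let γ be a smooth curve with γ(0) = p, γ'(0) = X_p, and ∇_{γ'}γ'|_{t=0} = 0. Then the second derivative of f along γ at t = 0 equals the dual Hessian quadratic form: d²/dt² f(γ(t))|_{t=0} = ⟨∇*_{X_p} grad f, X_p⟩. -/

import Mathlib

/-- A Riemannian metric: a smooth field of symmetric positive-definite bilinear forms. -/
def IsRiemannianMetric {n : ℕ}
    (g : EuclideanSpace ℝ (Fin n) →
      (EuclideanSpace ℝ (Fin n) →L[ℝ] EuclideanSpace ℝ (Fin n) →L[ℝ] ℝ)) : Prop :=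
  ContDiff ℝ (⊤ : ℕ∞) g ∧ (∀ x v w, g x v w = g x w v) ∧ (∀ x v, v ≠ 0 → 0 < g x v v)

/-- The affine connection determined by Christoffel data `Γ`:
`∇_X Y (x) = DY(x)[X(x)] + Γ(x)(X(x), Y(x))`. -/
noncomputable def connOf {n : ℕ}
    (Γ : EuclideanSpace ℝ (Fin n) →
      (EuclideanSpace ℝ (Fin n) →L[ℝ] EuclideanSpace ℝ (Fin n) →L[ℝ] EuclideanSpace ℝ (Fin n)))
    (X Y : EuclideanSpace ℝ (Fin n) → EuclideanSpace ℝ (Fin n)) :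
    EuclideanSpace ℝ (Fin n) → EuclideanSpace ℝ (Fin n) :=
  fun x => fderiv ℝ Y x (X x) + Γ x (X x) (Y x)

/-- Duality of the connections determined by `Γ` and `Γ'` w.r.t. `g` (a dualistic structure):
`X⟨Y,Z⟩ = ⟨∇_X Y, Z⟩ + ⟨Y, ∇*_X Z⟩` for all smooth vector fields. -/
def IsDualPairOf {n : ℕ}
    (g : EuclideanSpace ℝ (Fin n) →
      (EuclideanSpace ℝ (Fin n) →L[ℝ] EuclideanSpace ℝ (Fin n) →L[ℝ] ℝ))
    (Γ Γ' : EuclideanSpace ℝ (Fin n) →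
      (EuclideanSpace ℝ (Fin n) →L[ℝ] EuclideanSpace ℝ (Fin n) →L[ℝ] EuclideanSpace ℝ (Fin n))) :
    Prop :=
  ∀ X Y Z : EuclideanSpace ℝ (Fin n) → EuclideanSpace ℝ (Fin n),
    ContDiff ℝ (⊤ : ℕ∞) X → ContDiff ℝ (⊤ : ℕ∞) Y → ContDiff ℝ (⊤ : ℕ∞) Z →
    ∀ x, fderiv ℝ (fun p => g p (Y p) (Z p)) x (X x)
      = g x (connOf Γ X Y x) (Z x) + g x (Y x) (connOf Γ' X Z x)

/-- Let `f : M → ℝ` be smooth on a manifold with dualistic structure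
`(g, ∇, ∇*)`, `p ∈ M`, and `γ` a smooth curve with `γ(0) = p`, `γ'(0) = X_p` and
`∇_{γ'}γ'|_{t=0} = 0` (a second-order retraction curve for `∇`).  Then
`d²/dt² f(γ(t))|_{t=0} = ⟨∇*_{X_p} grad f, X_p⟩`, the dual Hessian quadratic form. -/
theorem second_deriv_along_geodesic_eq_dual_hessian {n : ℕ}
    (g : EuclideanSpace ℝ (Fin n) →
      (EuclideanSpace ℝ (Fin n) →L[ℝ] EuclideanSpace ℝ (Fin n) →L[ℝ] ℝ))
    (hg : IsRiemannianMetric g)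
    (Γ Γ' : EuclideanSpace ℝ (Fin n) →
      (EuclideanSpace ℝ (Fin n) →L[ℝ] EuclideanSpace ℝ (Fin n) →L[ℝ] EuclideanSpace ℝ (Fin n)))
    (hΓ : ContDiff ℝ (⊤ : ℕ∞) Γ) (hΓ' : ContDiff ℝ (⊤ : ℕ∞) Γ')
    (hdual : IsDualPairOf g Γ Γ')
    (f : EuclideanSpace ℝ (Fin n) → ℝ) (hf : ContDiff ℝ (⊤ : ℕ∞) f)
    (gradf : EuclideanSpace ℝ (Fin n) → EuclideanSpace ℝ (Fin n))
    (hgradf : ContDiff ℝ (⊤ : ℕ∞) gradf)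
    (hgrad : ∀ x v, fderiv ℝ f x v = g x (gradf x) v)
    (p Xp : EuclideanSpace ℝ (Fin n))
    (γ : ℝ → EuclideanSpace ℝ (Fin n)) (hγ : ContDiff ℝ (⊤ : ℕ∞) γ)
    (hγ0 : γ 0 = p) (hγ'0 : deriv γ 0 = Xp)
    (hgeo : deriv (deriv γ) 0 + Γ p Xp Xp = 0) :
    deriv (deriv (fun t => f (γ t))) 0
      = g p (fderiv ℝ gradf p Xp + Γ' p Xp (gradf p)) Xp := by

  obtain ⟨hgs, hgsymm, -⟩ := hg
  have hgd : Differentiable ℝ g := hgs.differentiable (by simp)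
  have hγd : Differentiable ℝ γ := hγ.differentiable (by simp)
  have hγ'c : ContDiff ℝ (⊤ : ℕ∞) (deriv γ) := (contDiff_infty_iff_deriv.mp (hγ.of_le (by simp))).2
  -- fderiv of a scalar slice of g
  have aux : ∀ v w : EuclideanSpace ℝ (Fin n),
      fderiv ℝ (fun q => g q v w) p Xp = fderiv ℝ g p Xp v w := by
    intro v w
    have h1 := ((hgd p).hasFDerivAt.clm_apply (hasFDerivAt_const v p)).clm_apply
      (hasFDerivAt_const w p)
    rw [h1.fderiv]
    simp
  have dgsymm : ∀ v w : EuclideanSpace ℝ (Fin n),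
      fderiv ℝ g p Xp v w = fderiv ℝ g p Xp w v := by
    intro v w
    have e : (fun q => g q v w) = (fun q => g q w v) := funext fun q => hgsymm q v w
    rw [← aux v w, ← aux w v, e]
  -- key duality identity with constant vector fields
  have key : fderiv ℝ g p Xp Xp (gradf p)
      = g p (Γ p Xp Xp) (gradf p) + g p Xp (Γ' p Xp (gradf p)) := by
    have h := hdual (fun _ => Xp) (fun _ => Xp) (fun _ => gradf p)
      contDiff_const contDiff_const contDiff_const p
    simp only [connOf, fderiv_const, fderiv_fun_const, Pi.zero_apply, ContinuousLinearMap.zero_apply,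
      zero_add] at h
    rw [← aux Xp (gradf p)]
    exact h
  -- first derivative along γ
  have hderiv1 : deriv (fun t => f (γ t)) = fun t => g (γ t) (gradf (γ t)) (deriv γ t) := by
    funext t
    have h1 : HasDerivAt (fun s => f (γ s)) (fderiv ℝ f (γ t) (deriv γ t)) t :=
      (hf.differentiable (by simp) (γ t)).hasFDerivAt.comp_hasDerivAt t (hγd t).hasDerivAt
    rw [h1.deriv, hgrad]
  rw [hderiv1]
  -- second derivative via product rule
  have hc1 : HasDerivAt (fun t => g (γ t)) (fderiv ℝ g p Xp) 0 := by
    have := HasFDerivAt.comp_hasDerivAt (l := g) 0 (hgd (γ 0)).hasFDerivAt (hγd 0).hasDerivAt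
    rw [hγ0, hγ'0] at this
    exact this
  have hc2 : HasDerivAt (fun t => gradf (γ t)) (fderiv ℝ gradf p Xp) 0 := by
    have := (hgradf.differentiable (by simp) (γ 0)).hasFDerivAt.comp_hasDerivAt 0 (hγd 0).hasDerivAt
    rw [hγ0, hγ'0] at this
    exact this
  have hc3 : HasDerivAt (deriv γ) (deriv (deriv γ) 0) 0 :=
    (hγ'c.differentiable (by simp) 0).hasDerivAt
  have htot := (hc1.clm_apply hc2).clm_apply hc3
  rw [htot.deriv]
  have hγ'' : deriv (deriv γ) 0 = -(Γ p Xp Xp) := eq_neg_of_add_eq_zero_left hgeo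
  rw [hγ0, hγ'0, hγ'']
  simp only [ContinuousLinearMap.add_apply, map_add, map_neg, ContinuousLinearMap.neg_apply]
  have e1 : fderiv ℝ g p Xp (gradf p) Xp = fderiv ℝ g p Xp Xp (gradf p) := dgsymm _ _
  have e2 : g p (gradf p) (Γ p Xp Xp) = g p (Γ p Xp Xp) (gradf p) := hgsymm _ _ _
  have e3 : g p Xp (Γ' p Xp (gradf p)) = g p (Γ' p Xp (gradf p)) Xp := hgsymm _ _ _
  rw [e1, key, e2, e3]
  ring
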